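/- Let S and A be nonempty finite sets and let p be a transition kernel as defined. Let k_∞ = sup_{n∈ℕ} T_p^n(0) and suppose (s,a) ∈ S × A satisfies k_∞(s,a) = 0. Then for every s' with p(s'|s,a) > 0, one has p(s',1|s,a) = 0 and min_{a' ∈ A} k_∞(s',a') = 0; that is, no positive-probability one-step transition from (s,a) can incur damage, and every positive-probability successor state admits an action with k_∞ equal to zero. -/

import Mathlib

open scoped Classical ENNReal

variable {S A : Type*}

/-- The budget operator `T_p` associated with a transition kernel
`p : S → A → PMF (S × Bool)` (second component = binary damage indicator):
`(T_p k)(s,a) = max_{s' : p(s'|s,a) > 0} [ 1{p(s',1|s,a) > 0} + min_{a'} k(s',a') ]`,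
where `p(s'|s,a) = p(s',0|s,a) + p(s',1|s,a)`. -/
noncomputable def budgetOp [Fintype S] [Fintype A] (p : S → A → PMF (S × Bool))
    (k : S → A → ℕ∞) : S → A → ℕ∞ := fun s a =>
  (Finset.univ.filter fun s' : S => 0 < p s a (s', false) + p s a (s', true)).sup
    fun s' => (if 0 < p s a (s', true) then 1 else 0) + Finset.univ.inf fun a' => k s' a'

lemma budgetOp_mono [Fintype S] [Fintype A] (p : S → A → PMF (S × Bool))
    {k k' : S → A → ℕ∞} (h : ∀ s a, k s a ≤ k' s a) :
    ∀ s a, budgetOp p k s a ≤ budgetOp p k' s a := by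
  intro s a
  apply Finset.sup_mono_fun
  intro s' _
  exact add_le_add_right (Finset.inf_mono_fun fun a' _ => h s' a') _

lemma iter_step [Fintype S] [Fintype A] (p : S → A → PMF (S × Bool)) :
    ∀ n : ℕ, ∀ s a,
      (budgetOp p)^[n] (fun _ _ => 0) s a ≤ (budgetOp p)^[n+1] (fun _ _ => 0) s a := by
  intro n
  induction n with
  | zero => intro s a; exact zero_le
  | succ n ih2 =>
    intro s a
    rw [Function.iterate_succ_apply', Function.iterate_succ_apply']
    exact budgetOp_mono p ih2 s a

lemma iter_mono [Fintype S] [Fintype A] (p : S → A → PMF (S × Bool))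
    {m n : ℕ} (hmn : m ≤ n) :
    ∀ s a, (budgetOp p)^[m] (fun _ _ => 0) s a ≤ (budgetOp p)^[n] (fun _ _ => 0) s a := by
  induction n with
  | zero => simp_all
  | succ n ih =>
    rcases Nat.lt_or_ge m (n+1) with h | h
    · intro s a
      exact le_trans (ih (Nat.lt_succ_iff.mp h) s a) (iter_step p n s a)
    · have : m = n + 1 := le_antisymm hmn h
      subst this; intro s a; exact le_rfl

/-- if `k_∞ = sup_n T_p^n(0)` vanishes at `(s,a)`, then no
positive-probability one-step transition from `(s,a)` can incur damage, and every
positive-probability successor state admits an action with `k_∞` equal to zero. -/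
theorem kInfty_zero_consequences
    [Fintype S] [Nonempty S] [Fintype A] [Nonempty A]
    (p : S → A → PMF (S × Bool)) (s : S) (a : A)
    (hzero : (⨆ n : ℕ, (budgetOp p)^[n] (fun _ _ => 0) s a) = 0) :
    ∀ s' : S, 0 < p s a (s', false) + p s a (s', true) →
      p s a (s', true) = 0 ∧
      (Finset.univ.inf fun a' : A =>
        ⨆ n : ℕ, (budgetOp p)^[n] (fun _ _ => 0) s' a') = 0 := by
  intro s' hs'
  have hall : ∀ n : ℕ, (budgetOp p)^[n] (fun _ _ => 0) s a = 0 := by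
    intro n
    have := le_iSup (fun n : ℕ => (budgetOp p)^[n] (fun _ _ => 0) s a) n
    rw [hzero] at this
    exact le_antisymm this (zero_le)
  -- for each n, evaluate n+1 step
  have key : ∀ n : ℕ, (if 0 < p s a (s', true) then (1:ℕ∞) else 0) +
      Finset.univ.inf (fun a' => (budgetOp p)^[n] (fun _ _ => 0) s' a') = 0 := by
    intro n
    have h1 := hall (n + 1)
    rw [Function.iterate_succ_apply'] at h1
    have hmem : s' ∈ Finset.univ.filter
        fun s' : S => 0 < p s a (s', false) + p s a (s', true) :=
      Finset.mem_filter.mpr ⟨Finset.mem_univ _, hs'⟩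
    have := Finset.le_sup (f := fun s' => (if 0 < p s a (s', true) then (1:ℕ∞) else 0) +
      Finset.univ.inf fun a' => (budgetOp p)^[n] (fun _ _ => 0) s' a') hmem
    rw [budgetOp] at h1
    rw [h1] at this
    exact le_antisymm this (zero_le)
  have hind : p s a (s', true) = 0 := by
    by_contra h
    have hpos : 0 < p s a (s', true) := pos_iff_ne_zero.mpr h
    have := key 0
    rw [if_pos hpos] at this
    simp at this
  refine ⟨hind, ?_⟩
  have hinf : ∀ n : ℕ, Finset.univ.inf
      (fun a' => (budgetOp p)^[n] (fun _ _ => 0) s' a') = 0 := by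
    intro n
    have := key n
    rcases add_eq_zero.mp this with ⟨_, h2⟩
    exact h2
  -- find a single action that is 0 for all n
  have : ∃ a' : A, ∀ n : ℕ, (budgetOp p)^[n] (fun _ _ => 0) s' a' = 0 := by
    by_contra h
    push_neg at h
    choose f hf using h
    set N := Finset.univ.sup f with hN
    obtain ⟨a0, _, ha0⟩ := Finset.exists_mem_eq_inf (Finset.univ : Finset A)
      Finset.univ_nonempty (fun a' => (budgetOp p)^[N] (fun _ _ => 0) s' a')
    have hz : (budgetOp p)^[N] (fun _ _ => 0) s' a0 = 0 := by
      rw [← ha0]; exact hinf N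
    have hle := iter_mono p (Finset.le_sup (f := f) (Finset.mem_univ a0)) s' a0
    rw [hz] at hle
    exact hf a0 (le_antisymm hle (zero_le))
  obtain ⟨a', ha'⟩ := this
  have hsup : (⨆ n : ℕ, (budgetOp p)^[n] (fun _ _ => 0) s' a') = 0 := by
    simp [ha']
  refine le_antisymm ?_ (zero_le)
  calc Finset.univ.inf (fun a' : A => ⨆ n : ℕ, (budgetOp p)^[n] (fun _ _ => 0) s' a')
      ≤ ⨆ n : ℕ, (budgetOp p)^[n] (fun _ _ => 0) s' a' := Finset.inf_le (Finset.mem_univ a')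
    _ = 0 := hsup
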